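/- If c ∈ ℚ(q₁,q₂) lies in ℤ[q₁^{±1},q₂^{±1}] localized at the multiplicative set generated by the elements 1+q₁+⋯+q₁^{s-1} (s ∈ ℕ) and also lies in ℤ[q₁^{±1},q₂^{±1}] localized at the multiplicative set generated by the elements 1+q₃+⋯+q₃^{s-1} (s ∈ ℕ), where q₃ = (q₁q₂)^{-1}, then c ∈ ℤ[q₁^{±1},q₂^{±1}]. -/

import Mathlib

set_option maxHeartbeats 1000000
set_option synthInstance.maxHeartbeats 1000000
set_option maxRecDepth 10000


/- STATEMENT 16: inside ℚ(q₁,q₂), if an element c lies both in the localization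
of the Laurent ring ℤ[q₁^{±1},q₂^{±1}] at the multiplicative set generated by
the elements 1+q₁+⋯+q₁^{s-1}, and in the localization at the multiplicative set
generated by 1+q₃+⋯+q₃^{s-1} where q₃ = (q₁q₂)⁻¹, then c ∈ ℤ[q₁^{±1},q₂^{±1}].
Membership in the localizations is phrased as: some product of the indicated
denominators clears c into the Laurent subring. -/

noncomputable section

abbrev F2 : Type := FractionRing (MvPolynomial (Fin 2) ℤ)

noncomputable def q₁ : F2 := algebraMap (MvPolynomial (Fin 2) ℤ) F2 (MvPolynomial.X 0)
noncomputable def q₂ : F2 := algebraMap (MvPolynomial (Fin 2) ℤ) F2 (MvPolynomial.X 1)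
noncomputable def q₃ : F2 := (q₁ * q₂)⁻¹

/-- The Laurent polynomial subring ℤ[q₁^{±1},q₂^{±1}] of ℚ(q₁,q₂). -/
noncomputable def LaurentQ : Subring F2 := Subring.closure {q₁, q₁⁻¹, q₂, q₂⁻¹}

namespace St16

open MvPolynomial

abbrev P2 : Type := MvPolynomial (Fin 2) ℤ

abbrev ι : P2 →+* F2 := algebraMap P2 F2

lemma ι_inj : Function.Injective ι := IsFractionRing.injective P2 F2

@[simp] lemma iX0 : ι (X 0) = q₁ := rfl
@[simp] lemma iX1 : ι (X 1) = q₂ := rfl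

lemma q1_ne : q₁ ≠ 0 :=
  (map_ne_zero_iff ι ι_inj).mpr (X_ne_zero (0 : Fin 2))

lemma q2_ne : q₂ ≠ 0 :=
  (map_ne_zero_iff ι ι_inj).mpr (X_ne_zero (1 : Fin 2))

lemma iota_mem (f : P2) : ι f ∈ LaurentQ := by
  induction f using MvPolynomial.induction_on with
  | C a =>
      rw [show (C a : P2) = (a : P2) from (eq_intCast (C : ℤ →+* P2) a)]
      rw [map_intCast]
      exact intCast_mem LaurentQ a
  | add p q hp hq => rw [map_add]; exact add_mem hp hq
  | mul_X p i hp =>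
      rw [map_mul]
      refine mul_mem hp ?_
      fin_cases i
      · exact Subring.subset_closure (by simp)
      · exact Subring.subset_closure (by simp)

lemma mem_iff (d : F2) :
    d ∈ LaurentQ ↔ ∃ (f : P2) (k l : ℕ), d * q₁ ^ k * q₂ ^ l = ι f := by
  constructor
  · intro hd
    induction hd using Subring.closure_induction with
    | mem x hx =>
        simp only [Set.mem_insert_iff, Set.mem_singleton_iff] at hx
        rcases hx with h | h | h | h
        · exact ⟨X 0, 0, 0, by simp [h]⟩
        · exact ⟨1, 1, 0, by simp [h, inv_mul_cancel₀ q1_ne]⟩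
        · exact ⟨X 1, 0, 0, by simp [h]⟩
        · exact ⟨1, 0, 1, by simp [h, inv_mul_cancel₀ q2_ne]⟩
    | zero => exact ⟨0, 0, 0, by simp⟩
    | one => exact ⟨1, 0, 0, by simp⟩
    | add x y hx hy ihx ihy =>
        obtain ⟨f, k, l, hf⟩ := ihx
        obtain ⟨g, k', l', hg⟩ := ihy
        refine ⟨f * X 0 ^ k' * X 1 ^ l' + g * X 0 ^ k * X 1 ^ l, k + k', l + l', ?_⟩
        have : (x + y) * q₁ ^ (k + k') * q₂ ^ (l + l') =
            (x * q₁ ^ k * q₂ ^ l) * (q₁ ^ k' * q₂ ^ l') +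
            (y * q₁ ^ k' * q₂ ^ l') * (q₁ ^ k * q₂ ^ l) := by ring
        rw [this, hf, hg]
        simp [map_add, map_mul, map_pow]
        ring
    | neg x hx ihx =>
        obtain ⟨f, k, l, hf⟩ := ihx
        exact ⟨-f, k, l, by rw [map_neg, ← hf]; ring⟩
    | mul x y hx hy ihx ihy =>
        obtain ⟨f, k, l, hf⟩ := ihx
        obtain ⟨g, k', l', hg⟩ := ihy
        refine ⟨f * g, k + k', l + l', ?_⟩
        rw [map_mul, ← hf, ← hg]; ring
  · rintro ⟨f, k, l, h⟩
    have hd : d = ι f * (q₁⁻¹) ^ k * (q₂⁻¹) ^ l := by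
      rw [← h, show d * q₁ ^ k * q₂ ^ l * q₁⁻¹ ^ k * q₂⁻¹ ^ l
        = d * ((q₁ * q₁⁻¹) ^ k * (q₂ * q₂⁻¹) ^ l) from by ring,
        mul_inv_cancel₀ q1_ne, mul_inv_cancel₀ q2_ne, one_pow, one_pow, mul_one, mul_one]
    rw [hd]
    refine mul_mem (mul_mem (iota_mem f) (pow_mem ?_ k)) (pow_mem ?_ l)
    · exact Subring.subset_closure (by simp)
    · exact Subring.subset_closure (by simp)


noncomputable def E : P2 ≃ₐ[ℤ] Polynomial (MvPolynomial (Fin 1) ℤ) :=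
  (renameEquiv ℤ (Equiv.swap 0 1)).trans (MvPolynomial.finSuccEquiv ℤ 1)

@[simp] lemma E_X0 : E (X 0) = Polynomial.C (X 0) := by
  simp [E, renameEquiv_apply, rename_X]
  rw [show (1 : Fin 2) = Fin.succ 0 from rfl, MvPolynomial.finSuccEquiv_X_succ]

@[simp] lemma E_X1 : E (X 1) = Polynomial.X := by
  simp [E, renameEquiv_apply, rename_X]
  exact MvPolynomial.finSuccEquiv_X_zero

lemma prime_X0 : Prime (X 0 : P2) := by
  rw [← MulEquiv.prime_iff (E : P2 ≃* Polynomial (MvPolynomial (Fin 1) ℤ))]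
  rw [show (E : P2 ≃* Polynomial (MvPolynomial (Fin 1) ℤ)) (X 0) = Polynomial.C (X 0) from E_X0]
  rw [Polynomial.prime_C_iff]
  rw [← MulEquiv.prime_iff
    ((MvPolynomial.finSuccEquiv ℤ 0) : MvPolynomial (Fin 1) ℤ ≃* Polynomial (MvPolynomial (Fin 0) ℤ))]
  rw [show ((MvPolynomial.finSuccEquiv ℤ 0) : MvPolynomial (Fin 1) ℤ ≃* Polynomial (MvPolynomial (Fin 0) ℤ)) (X 0)
      = Polynomial.X from MvPolynomial.finSuccEquiv_X_zero]
  exact Polynomial.prime_X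

lemma prime_X1 : Prime (X 1 : P2) := by
  rw [← MulEquiv.prime_iff (E : P2 ≃* Polynomial (MvPolynomial (Fin 1) ℤ))]
  rw [show (E : P2 ≃* Polynomial (MvPolynomial (Fin 1) ℤ)) (X 1) = Polynomial.X from E_X1]
  exact Polynomial.prime_X

noncomputable def A (m : ℕ) : P2 := ∑ j ∈ Finset.range m, X 0 ^ j
noncomputable def B (m : ℕ) : P2 := ∑ j ∈ Finset.range m, (X 0 * X 1) ^ j

lemma cc_A (m : ℕ) (hm : 1 ≤ m) : constantCoeff (A m) = 1 := by
  simp [A, zero_pow_eq, Finset.sum_ite_eq' (Finset.range m) 0 (fun _ => (1:ℤ))]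
  omega

lemma A_ne_zero (m : ℕ) (hm : 1 ≤ m) : A m ≠ 0 := fun h => by
  have := cc_A m hm; rw [h] at this; simp at this

lemma relprime_A_X (m : ℕ) (hm : 1 ≤ m) (i : Fin 2) (hp : Prime (X i : P2)) :
    IsRelPrime (A m) (X i : P2) := by
  intro d hdA hdX
  obtain ⟨e, he⟩ := hdX
  rcases hp.irreducible.isUnit_or_isUnit he with h | h
  · exact h
  · exfalso
    obtain ⟨v, rfl⟩ := h
    obtain ⟨w, hw⟩ := hdA
    have hd : d = X i * (↑v⁻¹ : P2) := by
      have := congrArg (· * (↑v⁻¹ : P2)) he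
      simpa [mul_assoc] using this.symm
    have hXd : (X i : P2) ∣ A m := ⟨(↑v⁻¹ : P2) * w, by rw [hw, hd]; ring⟩
    have hzero := map_dvd (constantCoeff) hXd
    rw [constantCoeff_X, cc_A m hm] at hzero
    exact one_ne_zero (eq_zero_of_zero_dvd hzero)

lemma relprime_A_B (m m' : ℕ) (hm : 1 ≤ m) (hm' : 1 ≤ m') :
    IsRelPrime (A m) (B m') := by
  intro d hdA hdB
  -- E d has natDegree 0
  have hEA : E (A m) = Polynomial.C (∑ j ∈ Finset.range m, (X 0 : MvPolynomial (Fin 1) ℤ) ^ j) := by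
    simp [A, map_sum, map_pow]
  have hEAne : E (A m) ≠ 0 := by
    rw [show (0 : Polynomial (MvPolynomial (Fin 1) ℤ)) = E 0 from (map_zero E).symm]
    exact fun h => A_ne_zero m hm (E.injective h)
  have hdeg : (E d).natDegree = 0 := by
    have h1 : (E d).natDegree ≤ (E (A m)).natDegree :=
      Polynomial.natDegree_le_of_dvd (map_dvd E hdA) hEAne
    rw [hEA, Polynomial.natDegree_C] at h1
    omega
  have ha : E d = Polynomial.C ((E d).coeff 0) :=
    Polynomial.eq_C_of_natDegree_le_zero (le_of_eq hdeg)
  set a := (E d).coeff 0 with ha0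
  -- a divides coeff 0 of E (B m') = 1
  have hEB : (E (B m')).coeff 0 = 1 := by
    simp only [B, map_sum, map_pow, map_mul, E_X0, E_X1]
    rw [Polynomial.finset_sum_coeff]
    have : ∀ j ∈ Finset.range m', ((Polynomial.C (X 0 : MvPolynomial (Fin 1) ℤ) * Polynomial.X) ^ j).coeff 0
        = if j = 0 then 1 else 0 := by
      intro j _
      rw [mul_pow, ← map_pow, Polynomial.coeff_C_mul, Polynomial.coeff_X_pow]
      by_cases h : j = 0 <;> simp [h, eq_comm]
    rw [Finset.sum_congr rfl this]
    simp
    omega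
  have hdvd : a ∣ (E (B m')).coeff 0 := by
    obtain ⟨w, hw⟩ := map_dvd E hdB
    rw [ha] at hw
    exact ⟨w.coeff 0, by rw [hw, Polynomial.coeff_C_mul]⟩
  rw [hEB] at hdvd
  have : IsUnit (E d) := by rw [ha]; exact (Polynomial.isUnit_C).mpr (isUnit_of_dvd_one hdvd)
  have h2 : IsUnit (E.symm (E d)) := this.map E.symm
  simpa using h2

lemma relprime_prod_left {t : P2} {s : Multiset P2} (h : ∀ a ∈ s, IsRelPrime a t) :
    IsRelPrime s.prod t := by
  induction s using Multiset.induction_on with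
  | empty => simpa using isRelPrime_one_left
  | cons a s ih =>
      rw [Multiset.prod_cons]
      exact (h a (Multiset.mem_cons_self a s)).mul_left
        (ih fun b hb => h b (Multiset.mem_cons_of_mem hb))

lemma relprime_prod_right {t : P2} {s : Multiset P2} (h : ∀ a ∈ s, IsRelPrime t a) :
    IsRelPrime t s.prod := by
  induction s using Multiset.induction_on with
  | empty => simpa using isRelPrime_one_right
  | cons a s ih =>
      rw [Multiset.prod_cons]
      exact (h a (Multiset.mem_cons_self a s)).mul_right
        (ih fun b hb => h b (Multiset.mem_cons_of_mem hb))


lemma sum_q3 (m : ℕ) (hm : 1 ≤ m) :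
    (q₁ * q₂) ^ (m - 1) * (∑ j ∈ Finset.range m, q₃ ^ j) = ι (B m) := by
  have hne : q₁ * q₂ ≠ 0 := mul_ne_zero q1_ne q2_ne
  have hB : ι (B m) = ∑ j ∈ Finset.range m, (q₁ * q₂) ^ j := by
    simp [B, map_sum, map_pow, map_mul]
  rw [hB, ← Finset.sum_range_reflect (fun j => (q₁ * q₂) ^ j) m, Finset.mul_sum]
  apply Finset.sum_congr rfl
  intro j hj
  rw [Finset.mem_range] at hj
  have hj' : j ≤ m - 1 := by omega
  rw [q₃, inv_pow, pow_sub₀ _ hne hj']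

lemma prod_q3 (t : Multiset ℕ) (ht : ∀ m ∈ t, 1 ≤ m) :
    ∃ N : ℕ, (q₁ * q₂) ^ N * (t.map fun m => ∑ j ∈ Finset.range m, q₃ ^ j).prod
      = ι ((t.map B).prod) := by
  induction t using Multiset.induction_on with
  | empty => exact ⟨0, by simp⟩
  | cons m t ih =>
      obtain ⟨N, hN⟩ := ih (fun a ha => ht a (Multiset.mem_cons_of_mem ha))
      refine ⟨(m - 1) + N, ?_⟩
      simp only [Multiset.map_cons, Multiset.prod_cons, map_mul]
      rw [show (q₁ * q₂) ^ (m - 1 + N) * ((∑ j ∈ Finset.range m, q₃ ^ j) *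
            (t.map fun m => ∑ j ∈ Finset.range m, q₃ ^ j).prod)
          = ((q₁ * q₂) ^ (m - 1) * (∑ j ∈ Finset.range m, q₃ ^ j)) *
            ((q₁ * q₂) ^ N * (t.map fun m => ∑ j ∈ Finset.range m, q₃ ^ j).prod) from by
          rw [pow_add]; ring,
        sum_q3 m (ht m (Multiset.mem_cons_self m t)), hN]

lemma prod_q1 (s : Multiset ℕ) :
    (s.map fun m => ∑ j ∈ Finset.range m, q₁ ^ j).prod = ι ((s.map A).prod) := by
  rw [map_multiset_prod, Multiset.map_map]
  congr 1
  apply Multiset.map_congr rfl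
  intro m _
  simp [A, map_sum, map_pow]

end St16

open St16 MvPolynomial in
theorem statement16 (c : F2)
    (h1 : ∃ s : Multiset ℕ, (∀ m ∈ s, 1 ≤ m) ∧
      c * (s.map fun m => ∑ j ∈ Finset.range m, q₁ ^ j).prod ∈ LaurentQ)
    (h3 : ∃ s : Multiset ℕ, (∀ m ∈ s, 1 ≤ m) ∧
      c * (s.map fun m => ∑ j ∈ Finset.range m, q₃ ^ j).prod ∈ LaurentQ) :
    c ∈ LaurentQ := by
  obtain ⟨s, hs, h1m⟩ := h1
  obtain ⟨t, ht, h3m⟩ := h3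
  set Ap : P2 := (s.map A).prod with hAp
  set Bp : P2 := (t.map B).prod with hBp
  rw [prod_q1 s] at h1m
  obtain ⟨f, k, l, hf⟩ := (mem_iff _).mp h1m
  obtain ⟨N, hN⟩ := prod_q3 t ht
  have h3m' : c * ι Bp ∈ LaurentQ := by
    have : c * ι Bp = (q₁ * q₂) ^ N *
        (c * (t.map fun m => ∑ j ∈ Finset.range m, q₃ ^ j).prod) := by
      rw [show (q₁ * q₂) ^ N * (c * (t.map fun m => ∑ j ∈ Finset.range m, q₃ ^ j).prod)
          = c * ((q₁ * q₂) ^ N * (t.map fun m => ∑ j ∈ Finset.range m, q₃ ^ j).prod) from by ring,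
        hN]
    rw [this]
    refine mul_mem (pow_mem (mul_mem ?_ ?_) N) h3m
    · exact Subring.subset_closure (by simp)
    · exact Subring.subset_closure (by simp)
  obtain ⟨g, k', l', hg⟩ := (mem_iff _).mp h3m'
  have key : ι (f * Bp * X 0 ^ k' * X 1 ^ l') = ι (g * Ap * X 0 ^ k * X 1 ^ l) := by
    simp only [map_mul, map_pow, iX0, iX1]
    rw [← hf, ← hg]
    ring
  have keyP : f * Bp * X 0 ^ k' * X 1 ^ l' = g * Ap * X 0 ^ k * X 1 ^ l := ι_inj key
  have hdvd : Ap ∣ f * (Bp * X 0 ^ k' * X 1 ^ l') :=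
    ⟨g * X 0 ^ k * X 1 ^ l, by linear_combination keyP⟩
  have hrel : IsRelPrime Ap (Bp * X 0 ^ k' * X 1 ^ l') := by
    apply relprime_prod_left
    intro a ha
    rw [Multiset.mem_map] at ha
    obtain ⟨m, hms, rfl⟩ := ha
    have hm := hs m hms
    refine IsRelPrime.mul_right (IsRelPrime.mul_right ?_
      ((relprime_A_X m hm 0 prime_X0).pow_right)) ((relprime_A_X m hm 1 prime_X1).pow_right)
    apply relprime_prod_right
    intro b hb
    rw [Multiset.mem_map] at hb
    obtain ⟨m', hm's, rfl⟩ := hb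
    exact relprime_A_B m m' hm (ht m' hm's)
  obtain ⟨h, hh⟩ := hrel.dvd_of_dvd_mul_right hdvd
  have hApne : ι Ap ≠ 0 := by
    rw [map_ne_zero_iff ι ι_inj]
    apply Multiset.prod_ne_zero
    intro hcon
    rw [Multiset.mem_map] at hcon
    obtain ⟨m, hms, hm0⟩ := hcon
    exact A_ne_zero m (hs m hms) hm0
  have hc : c * q₁ ^ k * q₂ ^ l = ι h := by
    apply mul_left_cancel₀ hApne
    rw [← map_mul, ← hh, ← hf]
    ring
  exact (mem_iff c).mpr ⟨h, k, l, hc⟩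


end
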